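/- Let R be a Frobenius algebra over a field k with nondegenerate associative bilinear form ⟨a,b⟩ = ε(ab) and Nakayama automorphism ν (so ⟨a,b⟩ = ⟨b, ν(a)⟩). For f ∈ C^n(R) define Δ_i f ∈ C^{n-1}(R) by ⟨Δ_i f(a_1⊗···⊗a_{n-1}), a_n⟩ = ⟨f(a_i⊗···⊗a_n⊗ν(a_1)⊗···⊗ν(a_{i-1})), 1⟩, and Δ f = Σ_{i=1}^n (−1)^{i(n-1)} Δ_i f. Then for every f ∈ C^n(R): δ_{n-1}(Δ f) + Δ(δ_n f) = f^ν − f, where f^ν(a_1⊗···⊗a_n) = ν^{-1}(f(ν a_1 ⊗···⊗ ν a_n)). -/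

import Mathlib

/-!
Pair both sides with an arbitrary `x` and conclude by nondegeneracy. By the defining property
of `Δ`, `⟨δ(Δf)(a), x⟩` is a double sum over the faces `p` of `δ` and the rotations `q`, while
`⟨Δ(δf)(a), x⟩` is a sum over the rotations `i` of `(a, x)` of `δf` evaluated there, i.e. of the
two outer faces and the inner faces `j` of that rotation. An inner face of a rotation of `(a, x)` is a rotation of a face of
`(a, x)`: the wrapped-around products `aₙ x`, `x ν(a₀)` and `ν(aₘ) ν(aₘ₊₁) = ν(aₘ aₘ₊₁)` account
for the outer faces and the remaining inner ones. The signs are opposite, so these terms cancel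
`⟨δ(Δf)(a), x⟩` exactly. The outer faces of consecutive rotations cancel by the Nakayama
relation, leaving `⟨ν⁻¹ f(ν a), x⟩` from the last rotation and `-⟨f(a), x⟩` from the first.
-/

open Finset

variable {k R : Type*}

/-- The argument tuple for the `i`-th inner face: multiply `a i` and `a (i+1)`. -/
def mergeAt [Ring R] {n : ℕ} (a : Fin (n + 1) → R) (i : Fin n) : Fin n → R :=
  fun j =>
    if j.val < i.val then a j.castSucc
    else if j.val = i.val then a j.castSucc * a j.succ
    else a j.succ

/-- The Hochschild differential `δ_n` on (raw) Hochschild cochains. -/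
def hdiff [Ring R] {n : ℕ} (f : (Fin n → R) → R) : (Fin (n + 1) → R) → R :=
  fun a =>
    a 0 * f (fun j => a j.succ)
      + (∑ i : Fin n, ((-1 : R) ^ (i.val + 1)) * f (mergeAt a i))
      + ((-1 : R) ^ (n + 1)) * (f (fun j => a j.castSucc) * a (Fin.last n))

/-- The twist `f ↦ f^σ` of a cochain by an algebra automorphism `σ`. -/
def twist [CommRing k] [Ring R] [Algebra k R] {n : ℕ} (σ : R ≃ₐ[k] R)
    (f : (Fin n → R) → R) : (Fin n → R) → R :=
  fun a => σ.symm (f (fun j => σ (a j)))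

/-- The cyclic argument arrangement `a_i ⊗ ⋯ ⊗ a_{n-1} ⊗ x ⊗ ν a_1 ⊗ ⋯ ⊗ ν a_{i-1}`
(0-based: shift by `i`, insert `x` after the tail of `a`, apply `ν` to the wrapped part). -/
def cycArr [Ring R] {n : ℕ} (ν : R → R) (a : Fin n → R) (x : R) (i : Fin (n + 1)) :
    Fin (n + 1) → R :=
  fun j =>
    if h1 : i.val + j.val < n then a ⟨i.val + j.val, h1⟩
    else if h2 : i.val + j.val = n then x
    else ν (a ⟨i.val + j.val - (n + 1), by
      have := i.isLt; have := j.isLt; omega⟩)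

/-- `Df` is the Tradler operator `Δ f` of the (n+1)-cochain `f`, characterized via the
Frobenius form `⟨a,b⟩ = ε(ab)`:
`⟨Δf(a_1 ⊗ ⋯ ⊗ a_{n-1}), a_n⟩ = Σ_i (−1)^{i(n-1)} ⟨f(a_i ⊗ ⋯ ⊗ a_n ⊗ ν a_1 ⊗ ⋯ ⊗ ν a_{i-1}), 1⟩`. -/
def IsDeltaOf [CommRing k] [Ring R] [Algebra k R] {n : ℕ} (ε : R →ₗ[k] k) (ν : R → R)
    (f : (Fin (n + 1) → R) → R) (Df : (Fin n → R) → R) : Prop :=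
  ∀ (a : Fin n → R) (x : R),
    ε (Df a * x)
      = ∑ i : Fin (n + 1), ((-1 : k) ^ ((i.val + 1) * n)) * ε (f (cycArr ν a x i))

lemma neg_one_pow_mul_eq_neg_mul {M : Type*} [Ring M] {m n : ℕ} (h : Even m ↔ ¬Even n) (c : M) :
    (-1 : M) ^ m * c = -((-1) ^ n * c) := by
  rw [neg_one_pow_congr (n := n + 1) (by rwa [Nat.even_add_one]), pow_succ, mul_neg_one, neg_mul]

section Rotations

variable [Ring R] {n : ℕ} (ν : R → R) (a : Fin n → R) (x : R)

lemma cycArr_zero_castSucc (j : Fin n) : cycArr ν a x 0 j.castSucc = a j := by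
  simp [cycArr]

lemma cycArr_zero_last : cycArr ν a x 0 (Fin.last n) = x := by
  simp [cycArr]

lemma cycArr_last_zero : cycArr ν a x (Fin.last n) 0 = x := by
  simp [cycArr]

lemma cycArr_last_succ (j : Fin n) : cycArr ν a x (Fin.last n) j.succ = ν (a j) := by
  simp only [cycArr, Fin.val_last, Fin.val_succ]
  grind

lemma cycArr_castSucc_zero (i : Fin n) : cycArr ν a x i.castSucc 0 = a i := by
  simp [cycArr]

lemma cycArr_succ_last (i : Fin n) : cycArr ν a x i.succ (Fin.last n) = ν (a i) := by
  simp only [cycArr, Fin.val_last, Fin.val_succ]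
  grind

lemma cycArr_succ_castSucc (i j : Fin n) :
    cycArr ν a x i.succ j.castSucc = cycArr ν a x i.castSucc j.succ := by
  simp only [cycArr, Fin.val_succ, Fin.val_castSucc]
  grind

end Rotations

section InnerFaces

variable [Ring R] {n : ℕ} (ν : R → R) (a : Fin (n + 1) → R) (x : R) (i : Fin (n + 2))
  (j : Fin (n + 1))

lemma mergeAt_cycArr_of_add_lt (h : i.val + j.val < n) :
    mergeAt (cycArr ν a x i) j = cycArr ν (mergeAt a ⟨i + j, h⟩) x ⟨i, by omega⟩ := by
  funext t
  simp only [mergeAt, cycArr, Fin.val_castSucc, Fin.val_succ, Fin.castSucc_mk, Fin.succ_mk]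
  split_ifs <;> grind

lemma mergeAt_cycArr_of_add_eq (h : i.val + j.val = n) :
    mergeAt (cycArr ν a x i) j
      = cycArr ν (fun s => a s.castSucc) (a (Fin.last n) * x) ⟨i, by omega⟩ := by
  funext t
  simp only [mergeAt, cycArr, Fin.val_castSucc, Fin.val_succ, Fin.castSucc_mk]
  split_ifs <;> grind

lemma mergeAt_cycArr_of_add_eq_succ (h : i.val + j.val = n + 1) :
    mergeAt (cycArr ν a x i) j
      = cycArr ν (fun s => a s.succ) (x * ν (a 0)) ⟨i - 1, by omega⟩ := by
  funext t
  simp only [mergeAt, cycArr, Fin.val_castSucc, Fin.val_succ, Fin.succ_mk]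
  split_ifs <;> grind

lemma mergeAt_cycArr_of_succ_lt_add (hν : ∀ u v : R, ν (u * v) = ν u * ν v)
    (h : n + 1 < i.val + j.val) :
    mergeAt (cycArr ν a x i) j
      = cycArr ν (mergeAt a ⟨i + j - (n + 2), by omega⟩) x ⟨i - 1, by omega⟩ := by
  funext t
  simp only [mergeAt, cycArr, Fin.val_castSucc, Fin.val_succ, Fin.castSucc_mk, Fin.succ_mk]
  split_ifs <;> grind

end InnerFaces

section Faces

variable [Ring R] {n : ℕ}

def faceArg (ν : R → R) (a : Fin (n + 1) → R) (x : R) : Fin (n + 2) → (Fin n → R) × R :=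
  Fin.cases (fun j => a j.succ, x * ν (a 0))
    (Fin.lastCases (fun j => a j.castSucc, a (Fin.last n) * x) fun i => (mergeAt a i, x))

variable (ν : R → R) (a : Fin (n + 1) → R) (x : R)

lemma faceArg_zero : faceArg ν a x 0 = (fun j => a j.succ, x * ν (a 0)) := rfl

lemma faceArg_last :
    faceArg ν a x (Fin.last (n + 1)) = (fun j => a j.castSucc, a (Fin.last n) * x) := by
  simp [faceArg, ← Fin.succ_last]

lemma faceArg_succ_castSucc (i : Fin n) : faceArg ν a x i.castSucc.succ = (mergeAt a i, x) := by
  simp [faceArg]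

end Faces

-- `(i, j) ↦ (p, q)` such that the `j`-th inner face of the `i`-th rotation of `(a, x)` is the
-- `q`-th rotation of the `p`-th face `faceArg ν a x p` (the `mergeAt_cycArr_of_*` lemmas).
def faceRot (n : ℕ) (z : Fin (n + 2) × Fin (n + 1)) : Fin (n + 2) × Fin (n + 1) :=
  if h : z.1.val + z.2.val < n then ((⟨z.1 + z.2, h⟩ : Fin n).castSucc.succ, ⟨z.1, by omega⟩)
  else if h₁ : z.1.val + z.2.val = n then (Fin.last (n + 1), ⟨z.1, by omega⟩)
  else if h₂ : z.1.val + z.2.val = n + 1 then (0, ⟨z.1 - 1, by omega⟩)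
  else ((⟨z.1 + z.2 - (n + 2), by omega⟩ : Fin n).castSucc.succ, ⟨z.1 - 1, by omega⟩)

def faceRotInv (n : ℕ) (z : Fin (n + 2) × Fin (n + 1)) : Fin (n + 2) × Fin (n + 1) :=
  if z.1.val = 0 then (⟨z.2 + 1, by omega⟩, ⟨n - z.2, by omega⟩)
  else if z.1.val = n + 1 then (⟨z.2, by omega⟩, ⟨n - z.2, by omega⟩)
  else if z.2.val < z.1.val then (⟨z.2, by omega⟩, ⟨z.1 - 1 - z.2, by omega⟩)
  else (⟨z.2 + 1, by omega⟩, ⟨n - (z.2 - z.1), by omega⟩)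

lemma faceRotInv_leftInverse (n : ℕ) : Function.LeftInverse (faceRotInv n) (faceRot n) := by
  rintro ⟨i, j⟩
  simp only [faceRot, faceRotInv]
  split_ifs <;> simp only [Prod.ext_iff, Fin.ext_iff, Fin.val_succ, Fin.val_castSucc, Fin.val_last,
    Fin.val_zero, true_and] at * <;> omega

lemma faceRot_bijective (n : ℕ) : Function.Bijective (faceRot n) :=
  Finite.injective_iff_bijective.mp (faceRotInv_leftInverse n).injective

section Pairing

variable [CommRing k] [Ring R] [Algebra k R] (ε : R →ₗ[k] k) {n : ℕ}

lemma map_neg_one_pow_mul (m : ℕ) (w : R) : ε ((-1) ^ m * w) = (-1) ^ m * ε w := by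
  have : (-1 : R) ^ m = algebraMap k R ((-1) ^ m) := by simp
  rw [this, ← Algebra.smul_def, map_smul, smul_eq_mul]

lemma map_hdiff (F : (Fin (n + 1) → R) → R) (b : Fin (n + 2) → R) :
    ε (hdiff F b) = ε (b 0 * F (fun j => b j.succ))
      + ∑ j : Fin (n + 1), (-1) ^ (j.val + 1) * ε (F (mergeAt b j))
      + (-1) ^ (n + 1 + 1) * ε (F (fun j => b j.castSucc) * b (Fin.last (n + 1))) := by
  simp only [hdiff, map_add, map_sum, map_neg_one_pow_mul]

lemma map_hdiff_mul (ν : R → R) (hν : ∀ u v : R, ε (u * v) = ε (v * ν u))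
    (g : (Fin n → R) → R) (a : Fin (n + 1) → R) (x : R) :
    ε (hdiff g a * x)
      = ∑ p : Fin (n + 2), (-1) ^ (p : ℕ) * ε (g (faceArg ν a x p).1 * (faceArg ν a x p).2) := by
  rw [Fin.sum_univ_succ, Fin.sum_univ_castSucc]
  simp only [faceArg_zero, faceArg_succ_castSucc, Fin.succ_last, faceArg_last, Fin.val_zero,
    Fin.val_succ, Fin.val_castSucc, Fin.val_last, pow_zero, one_mul, hdiff, add_mul, map_add,
    sum_mul, map_sum, mul_assoc, map_neg_one_pow_mul, hν (a 0), Nat.succ_eq_add_one, add_assoc]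

end Pairing

section Summands

variable [CommRing k] [Ring R] [Algebra k R] (ε : R →ₗ[k] k) (ν : R → R) {n : ℕ}
  (F : (Fin (n + 1) → R) → R) (a : Fin (n + 1) → R) (x : R)

def hdiffDeltaSummand (p : Fin (n + 2)) (q : Fin (n + 1)) : k :=
  (-1) ^ (p.val + (q.val + 1) * n) * ε (F (cycArr ν (faceArg ν a x p).1 (faceArg ν a x p).2 q))

def deltaHdiffInnerSummand (i : Fin (n + 2)) (j : Fin (n + 1)) : k :=
  (-1) ^ ((i.val + 1) * (n + 1) + (j.val + 1)) * ε (F (mergeAt (cycArr ν a x i) j))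

lemma map_hdiff_mul_of_isDeltaOf (hν : ∀ u v : R, ε (u * v) = ε (v * ν u))
    (Df : (Fin n → R) → R) (hDf : IsDeltaOf ε ν F Df) :
    ε (hdiff Df a * x) = ∑ p, ∑ q, hdiffDeltaSummand ε ν F a x p q := by
  rw [map_hdiff_mul ε ν hν]
  refine sum_congr rfl fun p _ => ?_
  rw [hDf, mul_sum]
  refine sum_congr rfl fun q _ => ?_
  rw [hdiffDeltaSummand, pow_add, mul_assoc]

lemma deltaHdiffInnerSummand_eq_neg (hν : ∀ u v : R, ν (u * v) = ν u * ν v)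
    (z : Fin (n + 2) × Fin (n + 1)) :
    deltaHdiffInnerSummand ε ν F a x z.1 z.2
      = -hdiffDeltaSummand ε ν F a x (faceRot n z).1 (faceRot n z).2 := by
  obtain ⟨i, j⟩ := z
  dsimp only [faceRot]
  split_ifs with h₀ h₁ h₂
  · rw [deltaHdiffInnerSummand, mergeAt_cycArr_of_add_lt ν a x i j h₀, hdiffDeltaSummand,
      faceArg_succ_castSucc]
    exact neg_one_pow_mul_eq_neg_mul (by simp only [Fin.val_succ, Fin.val_castSucc]; grind) _
  · rw [deltaHdiffInnerSummand, mergeAt_cycArr_of_add_eq ν a x i j h₁, hdiffDeltaSummand,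
      faceArg_last]
    exact neg_one_pow_mul_eq_neg_mul (by simp only [Fin.val_last]; grind) _
  · rw [deltaHdiffInnerSummand, mergeAt_cycArr_of_add_eq_succ ν a x i j h₂, hdiffDeltaSummand,
      faceArg_zero]
    exact neg_one_pow_mul_eq_neg_mul (by simp only [Fin.val_zero]; grind) _
  · rw [deltaHdiffInnerSummand, mergeAt_cycArr_of_succ_lt_add ν a x i j hν (by omega),
      hdiffDeltaSummand, faceArg_succ_castSucc]
    exact neg_one_pow_mul_eq_neg_mul (by simp only [Fin.val_succ, Fin.val_castSucc]; grind) _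

lemma sum_deltaHdiffInnerSummand (hν : ∀ u v : R, ν (u * v) = ν u * ν v) :
    ∑ i, ∑ j, deltaHdiffInnerSummand ε ν F a x i j
      = -∑ p, ∑ q, hdiffDeltaSummand ε ν F a x p q := by
  rw [← Fintype.sum_prod_type', ← Fintype.sum_prod_type', ← sum_neg_distrib]
  exact Fintype.sum_bijective _ (faceRot_bijective n) _ _
    (deltaHdiffInnerSummand_eq_neg ε ν F a x hν)

end Summands

section OuterFaces

variable [CommRing k] [Ring R] [Algebra k R] (ε : R →ₗ[k] k) (ν : R ≃ₐ[k] R) {n : ℕ}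
  (F : (Fin (n + 1) → R) → R) (a : Fin (n + 1) → R) (x : R)

lemma sum_outerFaces_eq_twist_sub (hν : ∀ u v : R, ε (u * v) = ε (v * ν u)) :
    ∑ i : Fin (n + 2), (-1) ^ ((i.val + 1) * (n + 1))
        * ε (cycArr ν a x i 0 * F (fun j => cycArr ν a x i j.succ))
      + ∑ i : Fin (n + 2), (-1) ^ ((i.val + 1) * (n + 1) + (n + 1 + 1))
        * ε (F (fun j => cycArr ν a x i j.castSucc) * cycArr ν a x i (Fin.last (n + 1)))
      = ε (twist ν F a * x) - ε (F a * x) := by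
  rw [Fin.sum_univ_castSucc, Fin.sum_univ_succ (n := n + 1)]
  simp only [cycArr_castSucc_zero, cycArr_succ_last, cycArr_last_zero, cycArr_last_succ,
    cycArr_zero_castSucc, cycArr_zero_last, cycArr_succ_castSucc]
  have htelescope : ∀ i : Fin (n + 1),
      (-1) ^ ((i.castSucc.val + 1) * (n + 1))
          * ε (a i * F (fun j => cycArr ν a x i.castSucc j.succ))
        = -((-1) ^ ((i.succ.val + 1) * (n + 1) + (n + 1 + 1))
          * ε (F (fun j => cycArr ν a x i.castSucc j.succ) * ν (a i))) := fun i => by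
    rw [hν]
    exact neg_one_pow_mul_eq_neg_mul (by simp only [Fin.val_succ, Fin.val_castSucc]; grind) _
  have hlast : ε (x * F (fun j => ν (a j))) = ε (twist ν F a * x) := by
    rw [twist, hν (ν.symm _), AlgEquiv.apply_symm_apply]
  have hsign_last : (-1 : k) ^ ((n + 1 + 1) * (n + 1)) = 1 := Even.neg_one_pow (by grind)
  have hsign_first : (-1 : k) ^ ((0 + 1) * (n + 1) + (n + 1 + 1)) = -1 :=
    Odd.neg_one_pow (by grind)
  simp only [htelescope, sum_neg_distrib, Fin.val_last, Fin.val_zero, hlast]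
  rw [hsign_last, hsign_first]
  ring

lemma map_mul_of_isDeltaOf_hdiff (hν : ∀ u v : R, ε (u * v) = ε (v * ν u))
    (Ddf : (Fin (n + 1) → R) → R) (hDdf : IsDeltaOf ε ν (hdiff F) Ddf) :
    ε (Ddf a * x) = ε (twist ν F a * x) - ε (F a * x)
      - ∑ p, ∑ q, hdiffDeltaSummand ε ν F a x p q := by
  rw [hDdf, ← sum_outerFaces_eq_twist_sub ε ν F a x hν, sub_eq_add_neg,
    ← sum_deltaHdiffInnerSummand ε ν F a x (map_mul ν)]
  simp only [map_hdiff, mul_add, sum_add_distrib, mul_sum, ← mul_assoc, ← pow_add,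
    deltaHdiffInnerSummand]
  ring

end OuterFaces

theorem delta_homotopy_general [Field k] [Ring R] [Algebra k R]
    {n : ℕ} (ε : R →ₗ[k] k)
    (hnd : ∀ a : R, (∀ b : R, ε (a * b) = 0) → a = 0)
    (ν : R ≃ₐ[k] R) (hν : ∀ a b : R, ε (a * b) = ε (b * ν a))
    (f : MultilinearMap k (fun _ : Fin (n + 1) => R) R)
    (Df : (Fin n → R) → R) (hDf : IsDeltaOf ε (⇑ν) (⇑f) Df)
    (Ddf : (Fin (n + 1) → R) → R) (hDdf : IsDeltaOf ε (⇑ν) (hdiff (⇑f)) Ddf) :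
    ∀ a : Fin (n + 1) → R, hdiff Df a + Ddf a = twist ν (⇑f) a - f a := by
  intro a
  refine sub_eq_zero.mp (hnd _ fun x => ?_)
  rw [sub_mul, add_mul, sub_mul, map_sub, map_add, map_sub,
    map_hdiff_mul_of_isDeltaOf ε ν f a x hν Df hDf,
    map_mul_of_isDeltaOf_hdiff ε ν f a x hν Ddf hDdf]
  ring

/-- the homotopy formula `δ_{n-1}(Δ f) + Δ(δ_n f) = f^ν − f`
for a Frobenius algebra `R` with Nakayama automorphism `ν`. -/
theorem delta_homotopy [Field k] [Ring R] [Algebra k R] [FiniteDimensional k R]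
    {n : ℕ} (ε : R →ₗ[k] k)
    (hnd : ∀ a : R, (∀ b : R, ε (a * b) = 0) → a = 0)
    (ν : R ≃ₐ[k] R) (hν : ∀ a b : R, ε (a * b) = ε (b * ν a))
    (f : MultilinearMap k (fun _ : Fin (n + 1) => R) R)
    (Df : (Fin n → R) → R) (hDf : IsDeltaOf ε (⇑ν) (⇑f) Df)
    (Ddf : (Fin (n + 1) → R) → R) (hDdf : IsDeltaOf ε (⇑ν) (hdiff (⇑f)) Ddf) :
    ∀ a : Fin (n + 1) → R, hdiff Df a + Ddf a = twist ν (⇑f) a - f a :=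
  delta_homotopy_general ε hnd ν hν f Df hDf Ddf hDdf
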